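/- Let k ≥ 2 be an integer and p = 12k+1. With the index set I, intersection matrix M, and vectors v₀, v_∞ defined in the context (with g = 12k²−3k−1 and x = −(k−2)/k), one has Σ_{W∈I} Σ_{V∈I} v₀(W)·M(W,V)·v_∞(V) = (3p³ − 99p² + 377p + 871)/24. (Equivalently, the algebraic intersection number of the vertical divisors V_{0,p}(𝔭ᵢ) and V_{∞,p}(𝔭ᵢ) on a special fiber of the minimal regular model of X₀(p²), measured in units of log(p²), equals this value.) -/
import Mathlib


/-- The index set of the irreducible components of a special fiber of the minimal regular
model of `X₀(p²)` for `p = 12k+1`: the components `C̃₀, C̃_∞, C̃¹₁,₁, C̃²₁,₁`, the lines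
`L̃ᵢ` (`1 ≤ i ≤ k`) and the chains `A_{l,i}`, `B_{l,i}` (`1 ≤ l ≤ 6k−1`, `1 ≤ i ≤ k`);
`a l i` encodes `A_{l+1,i}` and `b l i` encodes `B_{l+1,i}`. -/
inductive Idx (k : ℕ) where
  | c0 : Idx k
  | cinf : Idx k
  | d1 : Idx k
  | d2 : Idx k
  | ell : Fin k → Idx k
  | a : Fin (6 * k - 1) → Fin k → Idx k
  | b : Fin (6 * k - 1) → Fin k → Idx k
  deriving DecidableEq, Fintype

/-- The intersection matrix of the components of the special fiber. -/
def interMat (k : ℕ) : Idx k → Idx k → ℤ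
  | .c0, .c0 => -(k : ℤ)
  | .cinf, .cinf => -(k : ℤ)
  | .d1, .d1 => -(k : ℤ)
  | .d2, .d2 => -(k : ℤ)
  | .ell i, .ell j => if i = j then -4 else 0
  | .a l i, .a l' i' =>
      if i = i' then
        (if l = l' then -2 else if l.val + 1 = l'.val ∨ l'.val + 1 = l.val then 1 else 0)
      else 0
  | .b l i, .b l' i' =>
      if i = i' then
        (if l = l' then -2 else if l.val + 1 = l'.val ∨ l'.val + 1 = l.val then 1 else 0)
      else 0
  | .c0, .a l _ => if l.val = 0 then 1 else 0
  | .a l _, .c0 => if l.val = 0 then 1 else 0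
  | .cinf, .b l _ => if l.val = 0 then 1 else 0
  | .b l _, .cinf => if l.val = 0 then 1 else 0
  | .a l i, .ell j => if i = j ∧ l.val = 6 * k - 2 then 1 else 0
  | .ell j, .a l i => if i = j ∧ l.val = 6 * k - 2 then 1 else 0
  | .b l i, .ell j => if i = j ∧ l.val = 6 * k - 2 then 1 else 0
  | .ell j, .b l i => if i = j ∧ l.val = 6 * k - 2 then 1 else 0
  | .ell _, .d1 => 1
  | .d1, .ell _ => 1
  | .ell _, .d2 => 1
  | .d2, .ell _ => 1
  | _, _ => 0

/-- The geometric genus of each component. -/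
def genusFun (k : ℕ) : Idx k → ℤ
  | .d1 => 3 * (k : ℤ) ^ 2 - 3 * k + 1
  | .d2 => 3 * (k : ℤ) ^ 2 - 3 * k + 1
  | .ell _ => 6 * (k : ℤ)
  | _ => 0

/-- The genus `g = 12k² − 3k − 1` of `X₀(p²)` for `p = 12k+1`, as a rational number. -/
def gQ (k : ℕ) : ℚ := 12 * (k : ℚ) ^ 2 - 3 * k - 1

/-- The rational number `x = −(k−2)/k`. -/
def xQ (k : ℕ) : ℚ := -((k : ℚ) - 2) / k

/-- The coefficient vector of the vertical divisor `V_{0,p}(𝔭ᵢ)`. -/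
def v0 (k : ℕ) : Idx k → ℚ
  | .c0 => 12 - 12 * gQ k
  | .cinf => 0
  | .d1 => 7
  | .d2 => 7
  | .ell _ => 6 * (k : ℚ) * xQ k
  | .a l _ => (l.val + 1 : ℚ) * xQ k +
      ((12 * (k : ℚ) - 2 * (l.val + 1)) / (12 * k)) * (12 - 12 * gQ k)
  | .b l _ => (l.val + 1 : ℚ) * xQ k

/-- The coefficient vector of the vertical divisor `V_{∞,p}(𝔭ᵢ)`. -/
def vinf (k : ℕ) : Idx k → ℚ
  | .cinf => 12 - 12 * gQ k
  | .c0 => 0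
  | .d1 => 7
  | .d2 => 7
  | .ell _ => 6 * (k : ℚ) * xQ k
  | .b l _ => (l.val + 1 : ℚ) * xQ k +
      ((12 * (k : ℚ) - 2 * (l.val + 1)) / (12 * k)) * (12 - 12 * gQ k)
  | .a l _ => (l.val + 1 : ℚ) * xQ k
def idxEquiv (k : ℕ) :
    (Unit ⊕ Unit ⊕ Unit ⊕ Unit ⊕ Fin k ⊕ (Fin (6*k-1) × Fin k) ⊕ (Fin (6*k-1) × Fin k)) ≃ Idx k where
  toFun := fun e => match e with
    | .inl _ => .c0
    | .inr (.inl _) => .cinf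
    | .inr (.inr (.inl _)) => .d1
    | .inr (.inr (.inr (.inl _))) => .d2
    | .inr (.inr (.inr (.inr (.inl i)))) => .ell i
    | .inr (.inr (.inr (.inr (.inr (.inl ⟨l,i⟩))))) => .a l i
    | .inr (.inr (.inr (.inr (.inr (.inr ⟨l,i⟩))))) => .b l i
  invFun := fun z => match z with
    | .c0 => .inl ()
    | .cinf => .inr (.inl ())
    | .d1 => .inr (.inr (.inl ()))
    | .d2 => .inr (.inr (.inr (.inl ())))
    | .ell i => .inr (.inr (.inr (.inr (.inl i))))
    | .a l i => .inr (.inr (.inr (.inr (.inr (.inl ⟨l,i⟩)))))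
    | .b l i => .inr (.inr (.inr (.inr (.inr (.inr ⟨l,i⟩)))))
  left_inv := by rintro ((_|_)|(_|_)|(_|_)|(_|_)|i|⟨l,i⟩|⟨l,i⟩) <;> rfl
  right_inv := by rintro (_|_|_|_|i|⟨l,i⟩|⟨l,i⟩) <;> rfl

lemma sum_Idx {k : ℕ} (f : Idx k → ℚ) :
    ∑ z : Idx k, f z = f .c0 + f .cinf + f .d1 + f .d2 + (∑ i : Fin k, f (.ell i))
      + (∑ l : Fin (6*k-1), ∑ i : Fin k, f (.a l i))
      + (∑ l : Fin (6*k-1), ∑ i : Fin k, f (.b l i)) := by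
  rw [← Equiv.sum_comp (idxEquiv k) f]
  simp [Fintype.sum_sum_type, Fintype.sum_prod_type, idxEquiv]
  ring
lemma sum_fin_ite {n : ℕ} (m : ℕ) (hm : m < n) (h : Fin n → ℚ) :
    ∑ l : Fin n, (if l.val = m then h l else 0) = h ⟨m, hm⟩ := by
  rw [Finset.sum_eq_single ⟨m, hm⟩]
  · simp
  · intro b _ hb; rw [if_neg]; simpa [Fin.ext_iff] using hb
  · simp
lemma row_sum {n : ℕ} (l : Fin n) (g : ℕ → ℚ) :
    ∑ x : Fin n, (if l = x then -2 * g x.val else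
        if l.val + 1 = x.val ∨ x.val + 1 = l.val then g x.val else 0)
    = -2 * g l.val + (if l.val + 1 < n then g (l.val + 1) else 0)
      + (if 0 < l.val then g (l.val - 1) else 0) := by
  have key : ∀ x : Fin n, (if l = x then -2 * g x.val else
        if l.val + 1 = x.val ∨ x.val + 1 = l.val then g x.val else 0)
      = (if l = x then -2 * g x.val else 0) + (if x.val = l.val + 1 then g x.val else 0)
        + (if x.val = l.val - 1 ∧ 0 < l.val then g x.val else 0) := by
    intro x
    rcases eq_or_ne l x with rfl | hne
    · have h2 : ¬ ((l:ℕ) = l.val + 1) := by omega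
      have h3 : ¬ ((l:ℕ) = l.val - 1 ∧ 0 < l.val) := by omega
      simp [h2, h3]
    · have hv : l.val ≠ x.val := fun h => hne (Fin.ext h)
      rw [if_neg hne, if_neg hne]
      split_ifs
      all_goals try ring1
      all_goals (exfalso; omega)
  rw [Finset.sum_congr rfl (fun x _ => key x), Finset.sum_add_distrib, Finset.sum_add_distrib]
  congr 1
  · congr 1
    · simp
    · by_cases h2 : l.val + 1 < n
      · rw [sum_fin_ite (l.val+1) h2]; simp [h2]
      · rw [if_neg h2]
        apply Finset.sum_eq_zero; intro x _; rw [if_neg]; omega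
  · by_cases h3 : 0 < l.val
    · have hlt : l.val - 1 < n := by have := l.isLt; omega
      rw [if_pos h3, ← sum_fin_ite (l.val-1) hlt (fun x => g x.val)]
      apply Finset.sum_congr rfl; intro x _
      simp [h3]
    · rw [if_neg h3]
      apply Finset.sum_eq_zero; intro x _; rw [if_neg]; omega
set_option maxHeartbeats 1000000 in
lemma inner_a (k : ℕ) (hk : 2 ≤ k) (l : Fin (6*k-1)) (i : Fin k) :
    ∑ V : Idx k, ((interMat k (.a l i) V : ℤ) : ℚ) * vinf k V = 0 := by
  rw [sum_Idx]
  simp only [interMat, vinf]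
  push_cast
  simp only [ite_mul, one_mul, zero_mul, mul_zero, Finset.sum_const_zero, Finset.sum_const,
    Finset.card_univ, Fintype.card_fin, nsmul_eq_mul, Finset.sum_ite_eq, Finset.sum_ite_eq',
    Finset.mem_univ, if_true, ite_and]
  rw [row_sum l (fun m => ((m:ℚ)+1) * xQ k)]
  have hl := l.isLt
  rcases Nat.lt_or_ge l.val (6*k-2) with htop | htop
  · have h1 : l.val + 1 < 6*k-1 := by omega
    have h2 : ¬ (l.val = 6*k-2) := by omega
    rcases Nat.eq_zero_or_pos l.val with h0 | h0
    · rw [if_neg h2, if_pos h1, if_neg (by omega : ¬ 0 < l.val), h0]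
      push_cast
      ring
    · rw [if_neg h2, if_pos h1, if_pos h0]
      push_cast [Nat.cast_sub (by omega : 1 ≤ l.val)]
      ring
  · have h2 : l.val = 6*k-2 := by omega
    have h1 : ¬ (l.val + 1 < 6*k-1) := by omega
    have h0 : 0 < l.val := by omega
    have e1 : l.val - 1 = 6*k-3 := by omega
    rw [if_pos h2, if_neg h1, if_pos h0, e1, h2]
    have e2 : ((6*k-3:ℕ):ℚ) = 6*(k:ℚ)-3 := by
      push_cast [Nat.cast_sub (by omega : 3 ≤ 6*k)]; ring
    have e3 : ((6*k-2:ℕ):ℚ) = 6*(k:ℚ)-2 := by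
      push_cast [Nat.cast_sub (by omega : 2 ≤ 6*k)]; ring
    rw [e2, e3]
    ring
set_option maxHeartbeats 1000000 in
lemma inner_b (k : ℕ) (hk : 2 ≤ k) (l : Fin (6*k-1)) (i : Fin k) :
    ∑ V : Idx k, ((interMat k (.b l i) V : ℤ) : ℚ) * vinf k V = 0 := by
  have hk0 : (k:ℚ) ≠ 0 := Nat.cast_ne_zero.mpr (by omega)
  rw [sum_Idx]
  simp only [interMat, vinf]
  push_cast
  simp only [ite_mul, one_mul, zero_mul, mul_zero, Finset.sum_const_zero, Finset.sum_const,
    Finset.card_univ, Fintype.card_fin, nsmul_eq_mul, Finset.sum_ite_eq, Finset.sum_ite_eq',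
    Finset.mem_univ, if_true, ite_and]
  rw [row_sum l (fun m => ((m:ℚ)+1) * xQ k +
      ((12 * (k:ℚ) - 2 * ((m:ℚ)+1)) / (12 * (k:ℚ))) * (12 - 12 * gQ k))]
  have hl := l.isLt
  rcases Nat.lt_or_ge l.val (6*k-2) with htop | htop
  · have h1 : l.val + 1 < 6*k-1 := by omega
    have h2 : ¬ (l.val = 6*k-2) := by omega
    rcases Nat.eq_zero_or_pos l.val with h0 | h0
    · rw [if_neg h2, if_pos h1, if_neg (by omega : ¬ 0 < l.val), if_pos h0, h0]
      push_cast
      simp only [xQ, gQ]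
      field_simp
      ring
    · rw [if_neg h2, if_pos h1, if_pos h0, if_neg (by omega : ¬ l.val = 0)]
      push_cast [Nat.cast_sub (by omega : 1 ≤ l.val)]
      simp only [xQ, gQ]
      field_simp
      ring
  · have h2 : l.val = 6*k-2 := by omega
    have h1 : ¬ (l.val + 1 < 6*k-1) := by omega
    have h0 : 0 < l.val := by omega
    have e1 : l.val - 1 = 6*k-3 := by omega
    rw [if_pos h2, if_neg h1, if_pos h0, if_neg (by omega : ¬ l.val = 0), e1, h2]
    have e2 : ((6*k-3:ℕ):ℚ) = 6*(k:ℚ)-3 := by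
      push_cast [Nat.cast_sub (by omega : 3 ≤ 6*k)]; ring
    have e3 : ((6*k-2:ℕ):ℚ) = 6*(k:ℚ)-2 := by
      push_cast [Nat.cast_sub (by omega : 2 ≤ 6*k)]; ring
    rw [e2, e3]
    simp only [xQ, gQ]
    field_simp
    ring
set_option maxHeartbeats 1000000 in
lemma inner_d1 (k : ℕ) (hk : 2 ≤ k) :
    ∑ V : Idx k, ((interMat k .d1 V : ℤ) : ℚ) * vinf k V
      = -7*(k:ℚ) + 6*(k:ℚ)^2 * xQ k := by
  rw [sum_Idx]
  simp only [interMat, vinf]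
  push_cast
  simp only [ite_mul, one_mul, zero_mul, mul_zero, Finset.sum_const_zero, Finset.sum_const,
    Finset.card_univ, Fintype.card_fin, nsmul_eq_mul]
  ring

set_option maxHeartbeats 1000000 in
lemma inner_d2 (k : ℕ) (hk : 2 ≤ k) :
    ∑ V : Idx k, ((interMat k .d2 V : ℤ) : ℚ) * vinf k V
      = -7*(k:ℚ) + 6*(k:ℚ)^2 * xQ k := by
  rw [sum_Idx]
  simp only [interMat, vinf]
  push_cast
  simp only [ite_mul, one_mul, zero_mul, mul_zero, Finset.sum_const_zero, Finset.sum_const,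
    Finset.card_univ, Fintype.card_fin, nsmul_eq_mul]
  ring

set_option maxHeartbeats 1000000 in
lemma inner_ell (k : ℕ) (hk : 2 ≤ k) (i : Fin k) :
    ∑ V : Idx k, ((interMat k (.ell i) V : ℤ) : ℚ) * vinf k V
      = -24*(k:ℚ)*xQ k + 14 + 2*((6*(k:ℚ)-1)*xQ k)
        + ((12*(k:ℚ) - 2*(6*(k:ℚ)-1))/(12*(k:ℚ))) * (12 - 12*gQ k) := by
  have hm : 6*k-2 < 6*k-1 := by omega
  rw [sum_Idx]
  simp only [interMat, vinf]
  push_cast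
  simp only [ite_mul, one_mul, zero_mul, mul_zero, Finset.sum_const_zero, Finset.sum_const,
    Finset.card_univ, Fintype.card_fin, nsmul_eq_mul, ite_and, Finset.sum_ite_eq,
    Finset.sum_ite_eq', Finset.mem_univ, if_true]
  rw [sum_fin_ite (6*k-2) hm, sum_fin_ite (6*k-2) hm]
  have e3 : ((⟨6*k-2, hm⟩ : Fin (6*k-1)).val : ℚ) = 6*(k:ℚ)-2 := by
    show ((6*k-2:ℕ):ℚ) = _
    push_cast [Nat.cast_sub (by omega : 2 ≤ 6*k)]; ring
  rw [e3]
  ring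
set_option maxHeartbeats 1000000 in
lemma inner_c0 (k : ℕ) (hk : 2 ≤ k) :
    ∑ V : Idx k, ((interMat k .c0 V : ℤ) : ℚ) * vinf k V = -(k:ℚ) + 2 := by
  have hn : (0:ℕ) < 6*k-1 := by omega
  have hk0 : (k:ℚ) ≠ 0 := Nat.cast_ne_zero.mpr (by omega)
  rw [sum_Idx]
  simp only [interMat, vinf]
  push_cast
  simp only [ite_mul, one_mul, zero_mul, Finset.sum_const_zero, Finset.sum_const,
    Finset.card_univ, Fintype.card_fin, nsmul_eq_mul]
  rw [← Finset.mul_sum, sum_fin_ite 0 hn]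
  simp only [xQ]
  field_simp
  ring

lemma pull {k : ℕ} (W : Idx k) :
    ∑ V : Idx k, v0 k W * ((interMat k W V : ℤ) : ℚ) * vinf k V
      = v0 k W * ∑ V : Idx k, ((interMat k W V : ℤ) : ℚ) * vinf k V := by
  rw [Finset.mul_sum]; exact Finset.sum_congr rfl (fun V _ => mul_assoc _ _ _)


/-- The algebraic intersection number of the vertical divisors `V_{0,p}(𝔭ᵢ)` and
`V_{∞,p}(𝔭ᵢ)` on a special fiber of the minimal regular model of `X₀(p²)` for `p = 12k+1`,
in units of `log(p²)`: `v₀ᵀ M v_∞ = (3p³ − 99p² + 377p + 871)/24`. -/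
theorem stmt18 (k : ℕ) (hk : 2 ≤ k) (p : ℕ) (hp : p = 12 * k + 1) :
    ∑ W : Idx k, ∑ V : Idx k, v0 k W * ((interMat k W V : ℤ) : ℚ) * vinf k V =
      (3 * (p : ℚ) ^ 3 - 99 * (p : ℚ) ^ 2 + 377 * (p : ℚ) + 871) / 24 := by
  subst hp
  rw [sum_Idx]
  simp only [pull, inner_c0 k hk, inner_d1 k hk, inner_d2 k hk, inner_ell k hk,
    inner_a k hk, inner_b k hk, mul_zero, Finset.sum_const_zero, add_zero]
  simp only [v0]
  simp only [Finset.sum_const, Finset.card_univ, Fintype.card_fin, nsmul_eq_mul]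
  simp only [xQ, gQ]
  push_cast
  field_simp
  ring
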